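/- Let ε be a standard normal random variable and let Φ denote the standard normal cumulative distribution function. Let Z_σ = Φ(ε/σ) for σ > 0. Then for every σ ∈ (0,1) and every t ∈ (0, 1/2), P(|Z_σ − 1/2| > t) > P(|Z_1 − 1/2| > t); that is, |Z_σ − 1/2| is strictly stochastically larger than |Z_1 − 1/2| on (0, 1/2). -/

import Mathlib

/-!
Let `F` be the distribution function of an atomless law on `ℝ` that charges every open interval,
so that `F` is continuous and strictly increasing (for the standard normal, `F = Φ` and
`F 0 = 1/2` by symmetry). Since `|y / σ| ≥ |y|` and `F` is monotone,
`|F (y / σ) - F 0| ≥ |F y - F 0|`, so the event for `σ = 1` is contained in the event for `σ`.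
Taking `q > 0` with `F q = F 0 + t`, every `y ∈ (σ q, q)` lies in the second event but not in
the first, and this interval has positive probability.
-/

open MeasureTheory ProbabilityTheory

/-- The standard normal cumulative distribution function `Φ`. -/
noncomputable def stdNormalCDF (x : ℝ) : ℝ :=
  (ProbabilityTheory.gaussianReal 0 1 (Set.Iic x)).toReal

open Set Filter

lemma Monotone.abs_sub_le_abs_sub_div {F : ℝ → ℝ} (hF : Monotone F) {σ : ℝ} (hσ0 : 0 < σ)
    (hσ1 : σ ≤ 1) (y : ℝ) : |F y - F 0| ≤ |F (y / σ) - F 0| := by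
  rcases le_total 0 y with hy | hy
  · have hyσ : y ≤ y / σ := le_div_self hy hσ0 hσ1
    exact abs_le_abs_of_nonneg (by linarith [hF hy]) (by linarith [hF hyσ])
  · have hyσ : y / σ ≤ y := by
      rw [div_le_iff₀ hσ0]
      nlinarith
    exact abs_le_abs_of_nonpos (by linarith [hF hy]) (by linarith [hF hyσ])

lemma StrictMono.Ioo_subset_setOf_lt_abs_sub_div_sdiff {F : ℝ → ℝ} (hF : StrictMono F)
    {σ q : ℝ} (hσ : 0 < σ) (hq : 0 < q) :
    Ioo (σ * q) q ⊆
      {y | F q - F 0 < |F (y / σ) - F 0|} \ {y | F q - F 0 < |F y - F 0|} := by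
  rintro y ⟨hσy, hyq⟩
  have hy : 0 < y := (mul_pos hσ hq).trans hσy
  have hqy : q < y / σ := by rwa [lt_div_iff₀ hσ, mul_comm]
  constructor
  · show F q - F 0 < |F (y / σ) - F 0|
    exact lt_abs.2 (Or.inl (by linarith [hF hqy]))
  · show ¬ F q - F 0 < |F y - F 0|
    rw [abs_of_pos (sub_pos.2 (hF hy)), not_lt]
    linarith [hF hyq]

lemma MeasureTheory.measure_lt_of_Ioo_subset_sdiff {μ : Measure ℝ} [IsFiniteMeasure μ]
    [μ.IsOpenPosMeasure] {S T : Set ℝ} {a b : ℝ} (hS : NullMeasurableSet S μ) (hST : S ⊆ T)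
    (hab : a < b) (hT : Ioo a b ⊆ T \ S) : μ S < μ T :=
  calc μ S < μ S + μ (T \ S) :=
        ENNReal.lt_add_right (measure_ne_top _ _)
          ((Measure.measure_Ioo_pos μ |>.2 hab).trans_le (measure_mono hT)).ne'
    _ = μ T := by rw [measure_add_sdiff hS, union_eq_right.2 hST]

namespace ProbabilityTheory

variable {μ : Measure ℝ} [IsProbabilityMeasure μ]

lemma continuous_cdf [NullSingletonClass μ] : Continuous (cdf μ) := by
  refine continuous_iff_continuousAt.2 fun x => ?_
  rw [(cdf μ).mono.continuousAt_iff_leftLim_eq_rightLim, StieltjesFunction.rightLim_eq]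
  have hjump : ENNReal.ofReal (cdf μ x - Function.leftLim (cdf μ) x) = 0 := by
    rw [← StieltjesFunction.measure_singleton, measure_cdf, measure_singleton]
  linarith [ENNReal.ofReal_eq_zero.1 hjump, (cdf μ).mono.leftLim_le (le_refl x)]

lemma strictMono_cdf [μ.IsOpenPosMeasure] : StrictMono (cdf μ) := by
  intro a b hab
  have hpos : 0 < μ (Ioc a b) :=
    (Measure.measure_Ioo_pos μ |>.2 hab).trans_le (measure_mono Ioo_subset_Ioc_self)
  rw [← measure_cdf (μ := μ), StieltjesFunction.measure_Ioc, ENNReal.ofReal_pos] at hpos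
  linarith

lemma exists_gt_cdf_eq [NullSingletonClass μ] {a s : ℝ} (hs : s ∈ Ioo (cdf μ a) 1) :
    ∃ q > a, cdf μ q = s := by
  obtain ⟨M, hsM, haM⟩ :=
    ((tendsto_cdf_atTop (μ := μ)).eventually (lt_mem_nhds hs.2)).and (eventually_ge_atTop a)
      |>.exists
  obtain ⟨q, hq, hqs⟩ := intermediate_value_Ioo haM continuous_cdf.continuousOn ⟨hs.1, hsM⟩
  exact ⟨q, hq.1, hqs⟩

lemma cdf_zero_of_map_neg [NullSingletonClass μ] (hμ : μ.map (fun x => -x) = μ) :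
    cdf μ 0 = 1 / 2 := by
  have hsymm : μ (Iic 0) = μ (Iic 0)ᶜ :=
    calc μ (Iic 0) = μ.map (fun x => -x) (Iic 0) := by rw [hμ]
      _ = μ (Ici 0) := by rw [Measure.map_apply measurable_neg measurableSet_Iic]; simp
      _ = μ (Iic 0)ᶜ := by rw [compl_Iic, measure_congr Ioi_ae_eq_Ici]
  have hsum := measureReal_add_measureReal_compl (μ := μ) (measurableSet_Iic (a := (0 : ℝ)))
  rw [measureReal_def, measureReal_def, ← hsymm, ← measureReal_def, probReal_univ] at hsum
  rw [cdf_eq_real]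
  linarith

lemma cdf_gaussianReal_zero {v : NNReal} (hv : v ≠ 0) : cdf (gaussianReal 0 v) 0 = 1 / 2 := by
  have := nullSingletonClass_gaussianReal (μ := 0) hv
  exact cdf_zero_of_map_neg (by simpa using gaussianReal_map_neg (μ := 0) (v := v))

lemma measure_lt_abs_cdf_sub_lt_measure_lt_abs_cdf_div_sub [NullSingletonClass μ]
    [μ.IsOpenPosMeasure] {σ t : ℝ} (hσ : σ ∈ Ioo 0 1) (ht : t ∈ Ioo 0 (1 - cdf μ 0)) :
    μ {y | t < |cdf μ y - cdf μ 0|} < μ {y | t < |cdf μ (y / σ) - cdf μ 0|} := by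
  obtain ⟨q, hq0, hq⟩ := exists_gt_cdf_eq (μ := μ) (s := cdf μ 0 + t)
    ⟨by linarith [ht.1], by linarith [ht.2]⟩
  obtain rfl : t = cdf μ q - cdf μ 0 := by linarith
  refine measure_lt_of_Ioo_subset_sdiff ?_
    (fun y hy => hy.trans_le ((cdf μ).mono.abs_sub_le_abs_sub_div hσ.1 hσ.2.le y))
    (mul_lt_of_lt_one_left hq0 hσ.2)
    (strictMono_cdf.Ioo_subset_setOf_lt_abs_sub_div_sdiff hσ.1 hq0)
  exact (measurableSet_lt measurable_const
    (((cdf μ).mono.measurable.sub_const _).abs)).nullMeasurableSet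

end ProbabilityTheory

lemma stdNormalCDF_eq_cdf : stdNormalCDF = cdf (gaussianReal 0 1) := by
  ext x
  rw [cdf_eq_real, measureReal_def, stdNormalCDF]

theorem gaussian_pit_stochastic_domination_general
    {Ω : Type*} [MeasurableSpace Ω] (Q : Measure Ω)
    (ε : Ω → ℝ) (hεmeas : Measurable ε) (hεlaw : Q.map ε = gaussianReal 0 1) :
    ∀ σ ∈ Set.Ioo (0 : ℝ) 1, ∀ t ∈ Set.Ioo (0 : ℝ) (1 / 2),
      Q {ω | t < |stdNormalCDF (ε ω) - 1 / 2|} <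
        Q {ω | t < |stdNormalCDF (ε ω / σ) - 1 / 2|} := by
  rintro σ hσ t ht
  have := nullSingletonClass_gaussianReal (μ := 0) one_ne_zero
  have := (gaussianReal_absolutelyContinuous' 0 one_ne_zero).isOpenPosMeasure
  have hΦ0 := cdf_gaussianReal_zero one_ne_zero
  have hΦ : Measurable (cdf (gaussianReal 0 1)) := (cdf _).mono.measurable
  have hlaw {f : ℝ → ℝ} (hf : Measurable f) :
      Q {ω | t < f (ε ω)} = gaussianReal 0 1 {y | t < f y} := by
    rw [← hεlaw, Measure.map_apply hεmeas (measurableSet_lt measurable_const hf)]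
    rfl
  rw [stdNormalCDF_eq_cdf, ← hΦ0,
    hlaw (f := fun y => |cdf (gaussianReal 0 1) y - cdf (gaussianReal 0 1) 0|) (by fun_prop),
    hlaw (f := fun y => |cdf (gaussianReal 0 1) (y / σ) - cdf (gaussianReal 0 1) 0|) (by fun_prop)]
  exact measure_lt_abs_cdf_sub_lt_measure_lt_abs_cdf_div_sub hσ ⟨ht.1, by linarith [ht.2]⟩

/-- **Appendix A of Gneiting–Ranjan.** For standard normal `ε` and
`Z_σ = Φ(ε/σ)`: for every `σ ∈ (0,1)` and `t ∈ (0, 1/2)`,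
`P(|Z_σ − 1/2| > t) > P(|Z_1 − 1/2| > t)`, i.e., `|Z_σ − 1/2|` is strictly
stochastically larger than `|Z_1 − 1/2|` on `(0, 1/2)`. -/
theorem gaussian_pit_stochastic_domination
    {Ω : Type*} [MeasurableSpace Ω] (Q : Measure Ω) [IsProbabilityMeasure Q]
    (ε : Ω → ℝ) (hεmeas : Measurable ε) (hεlaw : Q.map ε = gaussianReal 0 1) :
    ∀ σ ∈ Set.Ioo (0 : ℝ) 1, ∀ t ∈ Set.Ioo (0 : ℝ) (1 / 2),
      Q {ω | t < |stdNormalCDF (ε ω) - 1 / 2|} <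
        Q {ω | t < |stdNormalCDF (ε ω / σ) - 1 / 2|} :=
  gaussian_pit_stochastic_domination_general Q ε hεmeas hεlaw
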